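/- arXiv:0909.2042 — 5 statements merged into one kernel-verified Lean document; each statement's English description precedes it below -/
import Mathlib

section
/- Let n ≥ 1, let h : Fin n → ℝ, and let T : Fin n → Fin n → Fin n → ℝ be totally symmetric. Then (Σ_i h(i)²)·(Σ_{i,j,k} T(i,j,k)²) − Σ_k (Σ_i h(i)·T(i,i,k))² = (1/2)·Σ_{i,s,k} (h(i)·T(s,s,k) − h(s)·T(i,i,k))² + (Σ_i h(i)²)·(2·Σ_{i≠j} T(i,i,j)² + Σ_{i,j,k pairwise distinct} T(i,j,k)²). In particular the left-hand side is nonnegative. -/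
/-!
Split `Σ_{i,j,k} T(i,j,k)²` according to which indices coincide. By total symmetry the three
patterns with exactly two equal indices contribute the same amount `Σ_{i≠j} T(i,i,j)²`, and the
remaining fully diagonal part `Σ_{i,k} T(i,i,k)²` is handled by Lagrange's identity applied, for each
`k`, to the vectors `h` and `(T(i,i,k))_i`.
-/

open Finset

section Lagrange

variable {ι κ R : Type*} [Fintype ι] [Fintype κ] [CommRing R]

theorem sum_sum_sq_mul_sub_mul_sq_eq (a b : ι → R) :
    ∑ i, ∑ j, (a i * b j - a j * b i) ^ 2 =
      2 * ((∑ i, a i ^ 2) * (∑ i, b i ^ 2) - (∑ i, a i * b i) ^ 2) := by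
  have expand : ∀ i j, (a i * b j - a j * b i) ^ 2 =
      a i ^ 2 * b j ^ 2 + b i ^ 2 * a j ^ 2 - 2 * ((a i * b i) * (a j * b j)) := by
    intro i j; ring
  simp only [expand, sum_add_distrib, sum_sub_distrib, ← mul_sum, ← sum_mul]
  ring

theorem sum_sum_sum_sq_mul_sub_mul_sq_eq (a : ι → R) (b : ι → κ → R) :
    ∑ i, ∑ j, ∑ k, (a i * b j k - a j * b i k) ^ 2 =
      2 * ((∑ i, a i ^ 2) * (∑ i, ∑ k, b i k ^ 2) - ∑ k, (∑ i, a i * b i k) ^ 2) := by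
  rw [sum_congr rfl fun i _ => sum_comm, sum_comm, sum_comm (f := fun i k => b i k ^ 2)]
  simp only [sum_sum_sq_mul_sub_mul_sq_eq a (b · _), ← mul_sum, sum_sub_distrib]

end Lagrange

section Coincidences

variable {ι M : Type*} [Fintype ι] [DecidableEq ι] [AddCommMonoid M]

theorem sum_sum_sum_split_coincidences (g : ι → ι → ι → M) :
    ∑ i, ∑ j, ∑ k, g i j k =
      ∑ i, ∑ k, g i i k + ∑ i, ∑ j, (if i ≠ j then g i j j else 0) +
        ∑ i, ∑ j, (if i ≠ j then g i j i else 0) +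
        ∑ i, ∑ j, ∑ k, if i ≠ j ∧ j ≠ k ∧ i ≠ k then g i j k else 0 := by
  have split : ∀ i j k, g i j k =
      (if i = j then g i j k else 0) + (if i ≠ j ∧ j = k then g i j k else 0) +
        (if i ≠ j ∧ i = k then g i j k else 0) +
        (if i ≠ j ∧ j ≠ k ∧ i ≠ k then g i j k else 0) := by
    intro i j k
    by_cases hij : i = j <;> by_cases hjk : j = k <;> by_cases hik : i = k <;> simp_all
  conv_lhs => enter [2, i, 2, j, 2, k]; rw [split i j k]
  simp only [sum_add_distrib]
  congr 3
  · simp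
  all_goals simp [ite_and]

theorem sum_sum_sum_eq_of_symmetric (g : ι → ι → ι → M)
    (h₁ : ∀ i j k, g i j k = g j i k) (h₂ : ∀ i j k, g i j k = g i k j) :
    ∑ i, ∑ j, ∑ k, g i j k =
      ∑ i, ∑ k, g i i k + (2 • ∑ i, ∑ j, (if i ≠ j then g i i j else 0) +
        ∑ i, ∑ j, ∑ k, if i ≠ j ∧ j ≠ k ∧ i ≠ k then g i j k else 0) := by
  have h_jj : ∑ i, ∑ j, (if i ≠ j then g i j j else 0) =
      ∑ i, ∑ j, (if i ≠ j then g i i j else 0) := by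
    rw [sum_comm]
    refine sum_congr rfl fun j _ => sum_congr rfl fun i _ => ?_
    simp only [ne_comm, h₁ i j j, h₂ j i j]
  have h_ji : ∑ i, ∑ j, (if i ≠ j then g i j i else 0) =
      ∑ i, ∑ j, (if i ≠ j then g i i j else 0) := by
    refine sum_congr rfl fun i _ => sum_congr rfl fun j _ => ?_
    rw [h₂ i j i]
  rw [sum_sum_sum_split_coincidences, h_jj, h_ji, two_nsmul]
  abel

end Coincidences

theorem symmetric_tensor_decomposition_general (n : ℕ)
    (h : Fin n → ℝ) (T : Fin n → Fin n → Fin n → ℝ)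
    (hsym₁ : ∀ i j k, T i j k = T j i k)
    (hsym₂ : ∀ i j k, T i j k = T i k j) :
    (∑ i, h i ^ 2) * (∑ i, ∑ j, ∑ k, T i j k ^ 2) -
        ∑ k, (∑ i, h i * T i i k) ^ 2 =
      (1 / 2) * (∑ i, ∑ s, ∑ k, (h i * T s s k - h s * T i i k) ^ 2) +
        (∑ i, h i ^ 2) *
          (2 * (∑ i, ∑ j, if i ≠ j then T i i j ^ 2 else 0) +
            ∑ i, ∑ j, ∑ k, if i ≠ j ∧ j ≠ k ∧ i ≠ k then T i j k ^ 2 else 0) ∧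
    0 ≤ (∑ i, h i ^ 2) * (∑ i, ∑ j, ∑ k, T i j k ^ 2) -
        ∑ k, (∑ i, h i * T i i k) ^ 2 := by
  have hsplit := sum_sum_sum_eq_of_symmetric (fun i j k => T i j k ^ 2)
    (fun i j k => by rw [hsym₁]) (fun i j k => by rw [hsym₂])
  have hlag := sum_sum_sum_sq_mul_sub_mul_sq_eq h fun i k => T i i k
  refine (fun hid => ⟨hid, hid ▸ ?_⟩) ?_
  · rw [hsplit, hlag, nsmul_eq_mul, Nat.cast_ofNat]
    ring
  · positivity

/-- Refined Lagrange-type decomposition for a totally symmetric 3-tensor `T`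
(total symmetry is expressed by invariance under the two transpositions
swapping the first two and the last two indices, which generate all
permutations of the three indices) and a vector `h` (the diagonal of the
second fundamental form):
`(Σ_i h(i)²)·(Σ_{i,j,k} T(i,j,k)²) − Σ_k (Σ_i h(i)·T(i,i,k))²
  = (1/2)·Σ_{i,s,k} (h(i)·T(s,s,k) − h(s)·T(i,i,k))²
    + (Σ_i h(i)²)·(2·Σ_{i≠j} T(i,i,j)² + Σ_{i,j,k pairwise distinct} T(i,j,k)²)`,
and in particular the left-hand side is nonnegative. -/
theorem symmetric_tensor_decomposition (n : ℕ) (hn : 1 ≤ n)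
    (h : Fin n → ℝ) (T : Fin n → Fin n → Fin n → ℝ)
    (hsym₁ : ∀ i j k, T i j k = T j i k)
    (hsym₂ : ∀ i j k, T i j k = T i k j) :
    (∑ i, h i ^ 2) * (∑ i, ∑ j, ∑ k, T i j k ^ 2) -
        ∑ k, (∑ i, h i * T i i k) ^ 2 =
      (1 / 2) * (∑ i, ∑ s, ∑ k, (h i * T s s k - h s * T i i k) ^ 2) +
        (∑ i, h i ^ 2) *
          (2 * (∑ i, ∑ j, if i ≠ j then T i i j ^ 2 else 0) +
            ∑ i, ∑ j, ∑ k, if i ≠ j ∧ j ≠ k ∧ i ≠ k then T i j k ^ 2 else 0) ∧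
    0 ≤ (∑ i, h i ^ 2) * (∑ i, ∑ j, ∑ k, T i j k ^ 2) -
        ∑ k, (∑ i, h i * T i i k) ^ 2 :=
  symmetric_tensor_decomposition_general n h T hsym₁ hsym₂
end

section
/- Let n ≥ 1, let h : Fin n → ℝ with Σ_i h(i)² > 0, and let T : Fin n → Fin n → Fin n → ℝ be totally symmetric. If equality (Σ_i h(i)²)·(Σ_{i,j,k} T(i,j,k)²) = Σ_k (Σ_i h(i)·T(i,i,k))² holds, then: (a) T(i,i,j) = 0 for all i ≠ j; (b) T(i,j,k) = 0 whenever i, j, k are pairwise distinct; and (c) h(i)·T(s,s,k) = h(s)·T(i,i,k) for all i, s, k. -/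
/-!
Fix the last index `k`. Cauchy–Schwarz and dropping the off-diagonal entries give
`(Σ_i h(i) T(i,i,k))² ≤ |h|² Σ_i T(i,i,k)² ≤ |h|² Σ_{i,j} T(i,j,k)²`, and summing over `k`
turns the assumed equality into equality in both steps for every `k`. Equality in the second
step (as `|h|² > 0`) kills the entries `T(i,j,k)` with `i ≠ j`, equality in Cauchy–Schwarz
makes `h` proportional to `i ↦ T(i,i,k)`, and symmetry in the last two slots moves
`T(i,i,j)` off the diagonal.
-/

open Finset

namespace Finset

variable {ι R : Type*}

theorem sum_sum_mul_sub_mul_sq [CommRing R] (s : Finset ι) (u v : ι → R) :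
    ∑ i ∈ s, ∑ j ∈ s, (u i * v j - u j * v i) ^ 2 =
      2 * ((∑ i ∈ s, u i ^ 2) * (∑ i ∈ s, v i ^ 2) - (∑ i ∈ s, u i * v i) ^ 2) := by
  have expand : ∀ i j, (u i * v j - u j * v i) ^ 2 =
      u i ^ 2 * v j ^ 2 + v i ^ 2 * u j ^ 2 - 2 * ((u i * v i) * (u j * v j)) :=
    fun i j => by ring
  simp only [expand, sum_sub_distrib, sum_add_distrib, ← mul_sum, ← sum_mul]
  ring

theorem sq_sum_mul_eq_mul_iff [CommRing R] [LinearOrder R] [IsStrictOrderedRing R]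
    (s : Finset ι) (u v : ι → R) :
    (∑ i ∈ s, u i * v i) ^ 2 = (∑ i ∈ s, u i ^ 2) * (∑ i ∈ s, v i ^ 2) ↔
      ∀ i ∈ s, ∀ j ∈ s, u i * v j = u j * v i := by
  have lagrange := sum_sum_mul_sub_mul_sq s u v
  rw [eq_comm, ← sub_eq_zero, ← mul_eq_zero_iff_left (two_ne_zero' R), ← lagrange,
    sum_eq_zero_iff_of_nonneg fun i _ => sum_nonneg fun j _ => sq_nonneg _]
  refine forall₂_congr fun i _ => ?_
  rw [sum_eq_zero_iff_of_nonneg fun j _ => sq_nonneg _]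
  simp only [sq_eq_zero_iff, sub_eq_zero]

end Finset

section DiagonalSquares

variable {ι R : Type*} [Fintype ι] [DecidableEq ι]

theorem sum_sum_eq_sum_diag_add_sum_off_diag [AddCommMonoid R] (M : ι → ι → R) :
    ∑ i, ∑ j, M i j = ∑ i, M i i + ∑ i, ∑ j ∈ univ.erase i, M i j := by
  rw [← sum_add_distrib]
  exact sum_congr rfl fun i _ => (add_sum_erase _ _ (mem_univ i)).symm

variable [CommRing R] [LinearOrder R] [IsStrictOrderedRing R]

theorem sum_diag_sq_le_sum_sum_sq (M : ι → ι → R) :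
    ∑ i, M i i ^ 2 ≤ ∑ i, ∑ j, M i j ^ 2 := by
  rw [sum_sum_eq_sum_diag_add_sum_off_diag fun i j => M i j ^ 2]
  exact le_add_of_nonneg_right (sum_nonneg fun i _ => sum_nonneg fun j _ => sq_nonneg _)

theorem sum_diag_sq_eq_sum_sum_sq_iff (M : ι → ι → R) :
    ∑ i, M i i ^ 2 = ∑ i, ∑ j, M i j ^ 2 ↔ ∀ i j, i ≠ j → M i j = 0 := by
  rw [sum_sum_eq_sum_diag_add_sum_off_diag fun i j => M i j ^ 2, eq_comm, add_eq_left,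
    sum_eq_zero_iff_of_nonneg fun i _ => sum_nonneg fun j _ => sq_nonneg _]
  refine forall_congr' fun i => ?_
  rw [sum_eq_zero_iff_of_nonneg fun j _ => sq_nonneg _]
  simp only [mem_erase, mem_univ, and_true, sq_eq_zero_iff, ne_comm, forall_const]

end DiagonalSquares

theorem equality_case_characterization_general (n : ℕ)
    (h : Fin n → ℝ) (hpos : 0 < ∑ i, h i ^ 2)
    (T : Fin n → Fin n → Fin n → ℝ)
    (hsym₂ : ∀ i j k, T i j k = T i k j)
    (heq : (∑ i, h i ^ 2) * (∑ i, ∑ j, ∑ k, T i j k ^ 2) =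
      ∑ k, (∑ i, h i * T i i k) ^ 2) :
    (∀ i j, i ≠ j → T i i j = 0) ∧
    (∀ i j k, i ≠ j → j ≠ k → i ≠ k → T i j k = 0) ∧
    (∀ i s k, h i * T s s k = h s * T i i k) := by
  set S := ∑ i, h i ^ 2
  have cauchy_schwarz k : (∑ i, h i * T i i k) ^ 2 ≤ S * ∑ i, T i i k ^ 2 :=
    sum_mul_sq_le_sq_mul_sq _ _ _
  have drop_off_diag k : S * ∑ i, T i i k ^ 2 ≤ S * ∑ i, ∑ j, T i j k ^ 2 :=
    mul_le_mul_of_nonneg_left (sum_diag_sq_le_sum_sum_sq fun i j => T i j k) hpos.le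
  have tight : ∀ k ∈ univ, (∑ i, h i * T i i k) ^ 2 = S * ∑ i, ∑ j, T i j k ^ 2 := by
    refine (sum_eq_sum_iff_of_le fun k _ => (cauchy_schwarz k).trans (drop_off_diag k)).mp ?_
    rw [← mul_sum, ← heq]
    exact congrArg (S * ·) ((sum_congr rfl fun i _ => sum_comm).trans sum_comm)
  have diag_eq_full k : ∑ i, T i i k ^ 2 = ∑ i, ∑ j, T i j k ^ 2 :=
    mul_left_cancel₀ hpos.ne'
      (by linarith [cauchy_schwarz k, drop_off_diag k, tight k (mem_univ k)])
  have off_diag_eq_zero i j k (hij : i ≠ j) : T i j k = 0 :=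
    (sum_diag_sq_eq_sum_sum_sq_iff fun i j => T i j k).mp (diag_eq_full k) i j hij
  have proportional i s k : h i * T s s k = h s * T i i k :=
    (sq_sum_mul_eq_mul_iff univ h fun i => T i i k).mp
      (by rw [diag_eq_full k]; exact tight k (mem_univ k)) i (mem_univ i) s (mem_univ s)
  exact ⟨fun i j hij => (hsym₂ i i j).trans (off_diag_eq_zero i j i hij),
    fun i j k hij _ _ => off_diag_eq_zero i j k hij, proportional⟩

/-- Characterization of the equality case `|∇A|² = |∇|A||²`: if `h : Fin n → ℝ`
has `Σ_i h(i)² > 0`, `T` is a totally symmetric 3-tensor (total symmetry is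
expressed by invariance under the two transpositions swapping the first two and
the last two indices, which generate all permutations of the three indices),
and `(Σ_i h(i)²)·(Σ_{i,j,k} T(i,j,k)²) = Σ_k (Σ_i h(i)·T(i,i,k))²`, then
(a) `T(i,i,j) = 0` for all `i ≠ j`;
(b) `T(i,j,k) = 0` whenever `i, j, k` are pairwise distinct;
(c) `h(i)·T(s,s,k) = h(s)·T(i,i,k)` for all `i, s, k`. -/
theorem equality_case_characterization (n : ℕ) (hn : 1 ≤ n)
    (h : Fin n → ℝ) (hpos : 0 < ∑ i, h i ^ 2)
    (T : Fin n → Fin n → Fin n → ℝ)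
    (hsym₁ : ∀ i j k, T i j k = T j i k)
    (hsym₂ : ∀ i j k, T i j k = T i k j)
    (heq : (∑ i, h i ^ 2) * (∑ i, ∑ j, ∑ k, T i j k ^ 2) =
      ∑ k, (∑ i, h i * T i i k) ^ 2) :
    (∀ i j, i ≠ j → T i i j = 0) ∧
    (∀ i j k, i ≠ j → j ≠ k → i ≠ k → T i j k = 0) ∧
    (∀ i s k, h i * T s s k = h s * T i i k) :=
  equality_case_characterization_general n h hpos T hsym₂ heq
end

section
/- Let n ≥ 1, let h : Fin n → ℝ be not identically zero, and let T : Fin n → Fin n → Fin n → ℝ be totally symmetric and satisfy: (a) T(i,i,j) = 0 for all i ≠ j; (b) T(i,j,k) = 0 whenever i, j, k are pairwise distinct; and (c) h(i)·T(s,s,k) = h(s)·T(i,i,k) for all i, s, k. Then there is at most one index i with T(i,i,i) ≠ 0. -/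
theorem eq_of_apply_ne_zero_of_diag_ne_zero {ι R : Type*} [MulZeroClass R] [NoZeroDivisors R]
    {h : ι → R} {T : ι → ι → ι → R}
    (ha : ∀ i j, i ≠ j → T i i j = 0)
    (hc : ∀ i s k, h i * T s s k = h s * T i i k)
    {s k : ι} (hs : h s ≠ 0) (hk : T k k k ≠ 0) : s = k := by
  by_contra hsk
  have hprod : h s * T k k k = 0 := by
    rw [← hc k s k, ha s k hsk, mul_zero]
  exact hk ((mul_eq_zero.mp hprod).resolve_left hs)

theorem at_most_one_nonzero_diagonal_general (n : ℕ)
    (h : Fin n → ℝ) (hh : h ≠ 0)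
    (T : Fin n → Fin n → Fin n → ℝ)
    (ha : ∀ i j, i ≠ j → T i i j = 0)
    (hc : ∀ i s k, h i * T s s k = h s * T i i k) :
    ∀ i j, T i i i ≠ 0 → T j j j ≠ 0 → i = j := by
  intro i j hi hj
  obtain ⟨s, hs⟩ := Function.ne_iff.mp hh
  exact (eq_of_apply_ne_zero_of_diag_ne_zero ha hc hs hi).symm.trans
    (eq_of_apply_ne_zero_of_diag_ne_zero ha hc hs hj)

/-- If `h : Fin n → ℝ` is not identically zero and `T` is a totally symmetric
3-tensor (total symmetry is expressed by invariance under the two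
transpositions swapping the first two and the last two indices, which generate
all permutations of the three indices) satisfying
(a) `T(i,i,j) = 0` for all `i ≠ j`,
(b) `T(i,j,k) = 0` whenever `i, j, k` are pairwise distinct,
(c) `h(i)·T(s,s,k) = h(s)·T(i,i,k)` for all `i, s, k`,
then there is at most one index `i` with `T(i,i,i) ≠ 0`. -/
theorem at_most_one_nonzero_diagonal (n : ℕ) (hn : 1 ≤ n)
    (h : Fin n → ℝ) (hh : h ≠ 0)
    (T : Fin n → Fin n → Fin n → ℝ)
    (hsym₁ : ∀ i j k, T i j k = T j i k)
    (hsym₂ : ∀ i j k, T i j k = T i k j)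
    (ha : ∀ i j, i ≠ j → T i i j = 0)
    (hb : ∀ i j k, i ≠ j → j ≠ k → i ≠ k → T i j k = 0)
    (hc : ∀ i s k, h i * T s s k = h s * T i i k) :
    ∀ i j, T i i i ≠ 0 → T j j j ≠ 0 → i = j :=
  at_most_one_nonzero_diagonal_general n h hh T ha hc
end

section
/- Let n ≥ 3 and x : Fin n → ℝ with S_1(x) ≥ 0 and S_2(x) ≥ 0. Then 3n·S_3(x) ≤ (n−2)·S_1(x)·S_2(x); equivalently, −3·S_3(x) ≥ −((n−2)/n)·S_1(x)·S_2(x). -/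
open Finset

/-- The `r`-th elementary symmetric polynomial of `x : Fin n → ℝ`:
`S_r(x) = Σ_{i_1 < ⋯ < i_r} x(i_1) ⋯ x(i_r)`. -/
noncomputable def esymm (n r : ℕ) (x : Fin n → ℝ) : ℝ :=
  ∑ s ∈ Finset.univ.powersetCard r, ∏ i ∈ s, x i

/-!
Newton's identities reduce the claim to `n P₃ + P₁³ ≤ (n + 1) P₁ P₂` for the power sums
`P_k = Σ x_i ^ k`. The centred vector `y_i = n x_i - P₁` turns this into
`Σ y³ ≤ (n - 2) P₁ Σ y²`, while `S₂ ≥ 0` becomes `Σ y² ≤ n (n - 1) P₁²`.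
Write `Σ y² = n (n - 1) t²`. Cauchy–Schwarz on the other coordinates gives `y_i ≤ (n - 1) t`,
so `0 ≤ Σ ((n - 1) t - y_i) (y_i + t)² = (n - 2) t Σ y² - Σ y³`; finally `t ≤ P₁`.
-/

theorem MvPolynomial.two_mul_esymm_two (σ R : Type*) [Fintype σ] [CommRing R] :
    2 * esymm σ R 2 = (∑ i, X i) ^ 2 - psum σ R 2 := by
  have h := mul_esymm_eq_sum σ R 2
  norm_num [sum_filter, Nat.sum_antidiagonal_eq_sum_range_succ_mk, sum_range_succ] at h
  linear_combination h

theorem MvPolynomial.three_mul_esymm_three (σ R : Type*) [Fintype σ] [CommRing R] :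
    3 * esymm σ R 3 = esymm σ R 2 * ∑ i, X i - (∑ i, X i) * psum σ R 2 + psum σ R 3 := by
  have h := mul_esymm_eq_sum σ R 3
  norm_num [sum_filter, Nat.sum_antidiagonal_eq_sum_range_succ_mk, sum_range_succ] at h
  linear_combination h

theorem esymm_eq_eval (n r : ℕ) (x : Fin n → ℝ) :
    esymm n r x = MvPolynomial.eval x (MvPolynomial.esymm (Fin n) ℝ r) := by
  simp only [esymm, MvPolynomial.esymm, map_sum, map_prod, MvPolynomial.eval_X]

theorem esymm_one_eq_sum (n : ℕ) (x : Fin n → ℝ) : esymm n 1 x = ∑ i, x i := by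
  simp [esymm_eq_eval, MvPolynomial.esymm_one]

theorem two_mul_esymm_two_eq (n : ℕ) (x : Fin n → ℝ) :
    2 * esymm n 2 x = (∑ i, x i) ^ 2 - ∑ i, x i ^ 2 := by
  simpa [esymm_eq_eval, MvPolynomial.psum] using
    congrArg (MvPolynomial.eval x) (MvPolynomial.two_mul_esymm_two (Fin n) ℝ)

theorem three_mul_esymm_three_eq (n : ℕ) (x : Fin n → ℝ) :
    3 * esymm n 3 x
      = esymm n 2 x * ∑ i, x i - (∑ i, x i) * ∑ i, x i ^ 2 + ∑ i, x i ^ 3 := by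
  simpa [esymm_eq_eval, MvPolynomial.psum] using
    congrArg (MvPolynomial.eval x) (MvPolynomial.three_mul_esymm_three (Fin n) ℝ)

section CenteredVector

variable {ι : Type*} [Fintype ι] {y : ι → ℝ}

theorem card_mul_sq_le_of_sum_eq_zero (hy : ∑ j, y j = 0) (i : ι) :
    Fintype.card ι * y i ^ 2 ≤ (Fintype.card ι - 1) * ∑ j, y j ^ 2 := by
  classical
  have hrest : ∑ j ∈ univ.erase i, y j = -y i := by
    linarith [sum_erase_add univ y (mem_univ i)]
  have hrest_sq : ∑ j ∈ univ.erase i, y j ^ 2 = ∑ j, y j ^ 2 - y i ^ 2 := by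
    linarith [sum_erase_add univ (fun j => y j ^ 2) (mem_univ i)]
  have hcard : ((univ.erase i).card : ℝ) = Fintype.card ι - 1 := by
    rw [cast_card_erase_of_mem (mem_univ i), card_univ]
  have hcs := sq_sum_le_card_mul_sum_sq (s := univ.erase i) (f := y)
  rw [hrest, hrest_sq, hcard, neg_sq] at hcs
  linarith

theorem sum_pow_three_le_of_sum_sq_eq (hy : ∑ j, y j = 0) {t : ℝ} (ht : 0 ≤ t)
    (hQ : ∑ j, y j ^ 2 = Fintype.card ι * (Fintype.card ι - 1) * t ^ 2) :
    ∑ j, y j ^ 3 ≤ (Fintype.card ι - 2) * t * ∑ j, y j ^ 2 := by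
  have hle : ∀ i, y i ≤ (Fintype.card ι - 1) * t := by
    intro i
    have hn : (1 : ℝ) ≤ Fintype.card ι :=
      Nat.one_le_cast.mpr (Fintype.card_pos_iff.mpr ⟨i⟩)
    have h := card_mul_sq_le_of_sum_eq_zero hy i
    rw [hQ] at h
    refine le_of_abs_le (abs_le_of_sq_le_sq ?_ (by nlinarith))
    nlinarith
  generalize hN : (Fintype.card ι : ℝ) = n at hQ hle ⊢
  -- `((n - 1) t, -t, …, -t)` is the extremal centred vector: this cubic vanishes at its entries.
  have hexpand : ∑ j, ((n - 1) * t - y j) * (y j + t) ^ 2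
      = (n - 3) * t * ∑ j, y j ^ 2 + (2 * n - 3) * t ^ 2 * ∑ j, y j + (n - 1) * (n * t ^ 3)
        - ∑ j, y j ^ 3 := by
    rw [sum_congr rfl fun j _ => (by ring : ((n - 1) * t - y j) * (y j + t) ^ 2
      = (n - 3) * t * y j ^ 2 + (2 * n - 3) * t ^ 2 * y j + (n - 1) * t ^ 3 - y j ^ 3)]
    simp only [sum_sub_distrib, sum_add_distrib, ← mul_sum, sum_const, card_univ, nsmul_eq_mul,
      hN]
  have hnonneg : 0 ≤ ∑ j, ((n - 1) * t - y j) * (y j + t) ^ 2 :=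
    sum_nonneg fun j _ => mul_nonneg (sub_nonneg.mpr (hle j)) (sq_nonneg _)
  rw [hexpand, hy] at hnonneg
  linear_combination hnonneg - t * hQ

theorem sum_pow_three_le_of_sum_sq_le (hn : 2 ≤ Fintype.card ι) (hy : ∑ j, y j = 0)
    {s : ℝ} (hs : 0 ≤ s)
    (hQ : ∑ j, y j ^ 2 ≤ Fintype.card ι * (Fintype.card ι - 1) * s ^ 2) :
    ∑ j, y j ^ 3 ≤ (Fintype.card ι - 2) * s * ∑ j, y j ^ 2 := by
  have hn2 : (2 : ℝ) ≤ Fintype.card ι := Nat.ofNat_le_cast.mpr hn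
  have hpos : 0 < (Fintype.card ι : ℝ) * (Fintype.card ι - 1) := by nlinarith
  have hQ0 : 0 ≤ ∑ j, y j ^ 2 := sum_nonneg fun j _ => sq_nonneg (y j)
  set t := √((∑ j, y j ^ 2) / (Fintype.card ι * (Fintype.card ι - 1)))
  have ht : t ≤ s := Real.sqrt_le_iff.mpr ⟨hs, (div_le_iff₀' hpos).mpr hQ⟩
  have hQt : ∑ j, y j ^ 2 = Fintype.card ι * (Fintype.card ι - 1) * t ^ 2 := by
    rw [Real.sq_sqrt (by positivity), mul_div_cancel₀ _ hpos.ne']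
  calc ∑ j, y j ^ 3 ≤ (Fintype.card ι - 2) * t * ∑ j, y j ^ 2 :=
        sum_pow_three_le_of_sum_sq_eq hy (Real.sqrt_nonneg _) hQt
    _ ≤ (Fintype.card ι - 2) * s * ∑ j, y j ^ 2 := by gcongr

theorem card_mul_sum_pow_three_add_le (hn : 2 ≤ Fintype.card ι) (x : ι → ℝ)
    (h1 : 0 ≤ ∑ i, x i) (h2 : ∑ i, x i ^ 2 ≤ (∑ i, x i) ^ 2) :
    Fintype.card ι * ∑ i, x i ^ 3 + (∑ i, x i) ^ 3
      ≤ (Fintype.card ι + 1) * (∑ i, x i) * ∑ i, x i ^ 2 := by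
  obtain ⟨n, hN⟩ : ∃ n : ℝ, Fintype.card ι = n := ⟨_, rfl⟩
  have hn0 : 0 < n := hN ▸ Nat.cast_pos.mpr (by omega)
  set P₁ := ∑ i, x i
  set P₂ := ∑ i, x i ^ 2
  set P₃ := ∑ i, x i ^ 3
  have hy1 : ∑ i, (n * x i - P₁) = 0 := by
    simp only [sum_sub_distrib, ← mul_sum, sum_const, card_univ, nsmul_eq_mul, hN]
    ring
  have hy2 : ∑ i, (n * x i - P₁) ^ 2 = n * (n * P₂ - P₁ ^ 2) := by
    rw [sum_congr rfl fun i _ => (by ring : (n * x i - P₁) ^ 2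
      = n ^ 2 * x i ^ 2 - 2 * n * P₁ * x i + P₁ ^ 2)]
    simp only [sum_add_distrib, sum_sub_distrib, ← mul_sum, sum_const, card_univ, nsmul_eq_mul,
      hN]
    ring
  have hy3 :
      ∑ i, (n * x i - P₁) ^ 3 = n * (n ^ 2 * P₃ - 3 * n * P₁ * P₂ + 2 * P₁ ^ 3) := by
    rw [sum_congr rfl fun i _ => (by ring : (n * x i - P₁) ^ 3
      = n ^ 3 * x i ^ 3 - 3 * n ^ 2 * P₁ * x i ^ 2 + 3 * n * P₁ ^ 2 * x i - P₁ ^ 3)]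
    simp only [sum_add_distrib, sum_sub_distrib, ← mul_sum, sum_const, card_univ, nsmul_eq_mul,
      hN]
    ring
  have key := sum_pow_three_le_of_sum_sq_le hn hy1 h1 (by rw [hN, hy2]; nlinarith)
  rw [hN, hy2, hy3] at key
  rw [hN]
  refine le_of_mul_le_mul_left ?_ (pow_pos hn0 2)
  linear_combination key

end CenteredVector

/-- The inequality `H_1·H_2 ≥ H_3` for normalized elementary symmetric
functions: for `n ≥ 3` and `x : Fin n → ℝ` with `S_1(x) ≥ 0` and `S_2(x) ≥ 0`,
one has `3n·S_3(x) ≤ (n−2)·S_1(x)·S_2(x)`; equivalently,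
`−3·S_3(x) ≥ −((n−2)/n)·S_1(x)·S_2(x)`. -/
theorem newton_S1_S2_S3 (n : ℕ) (hn : 3 ≤ n) (x : Fin n → ℝ)
    (hS1 : 0 ≤ esymm n 1 x) (hS2 : 0 ≤ esymm n 2 x) :
    3 * (n : ℝ) * esymm n 3 x ≤ ((n : ℝ) - 2) * esymm n 1 x * esymm n 2 x ∧
    -(((n : ℝ) - 2) / (n : ℝ)) * (esymm n 1 x * esymm n 2 x) ≤
      -(3 * esymm n 3 x) := by
  have h1 := esymm_one_eq_sum n x
  have h2 := two_mul_esymm_two_eq n x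
  have h3 := three_mul_esymm_three_eq n x
  have key := card_mul_sum_pow_three_add_le (by rw [Fintype.card_fin]; omega) x (h1 ▸ hS1)
    (by linarith)
  rw [Fintype.card_fin] at key
  have hmain : 3 * (n : ℝ) * esymm n 3 x ≤ ((n : ℝ) - 2) * esymm n 1 x * esymm n 2 x := by
    linear_combination key - ((n : ℝ) - 2) * esymm n 2 x * h1 + (n : ℝ) * h3 + (∑ i, x i) * h2
  refine ⟨hmain, ?_⟩
  have hn0 : (0 : ℝ) < n := Nat.cast_pos.mpr (by omega)
  rw [neg_mul, neg_le_neg_iff, div_mul_eq_mul_div, le_div_iff₀ hn0]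
  linarith
end

section
/- Let n ≥ 1 and let u : ℝⁿ → ℝ be a smooth function such that S_1(x) := div(∇u/W)(x) ≥ 0 for all x ∈ ℝⁿ, where W = √(1 + |∇u|²). Then for every R > 0 and every θ with 0 < θ < 1, ∫_{B(0,θR)} div(∇u/W) dx ≤ vol(B(0,R)) / ((1−θ)·R), where B(0,r) denotes the Euclidean ball of radius r centered at the origin and vol is Lebesgue measure. In particular, the integral of the mean curvature of an entire graph over Euclidean balls of radius θR grows at most like a constant (depending only on n and θ) times R^{n−1}. -/
set_option maxHeartbeats 1000000

open scoped ContDiff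


open Finset MeasureTheory

/-- The gradient `∇u(x)` of `u : ℝⁿ → ℝ`, as the vector of partial
derivatives. -/
noncomputable def egrad (n : ℕ) (u : EuclideanSpace ℝ (Fin n) → ℝ)
    (x : EuclideanSpace ℝ (Fin n)) : Fin n → ℝ :=
  fun i => fderiv ℝ u x (EuclideanSpace.single i 1)

/-- `W(x) = √(1 + |∇u(x)|²)`. -/
noncomputable def graphW (n : ℕ) (u : EuclideanSpace ℝ (Fin n) → ℝ)
    (x : EuclideanSpace ℝ (Fin n)) : ℝ :=
  Real.sqrt (1 + ∑ i, egrad n u x i ^ 2)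

/-- The (unnormalized) mean curvature of the graph of `u`:
`S₁(x) = div (∇u/W)(x) = Σ_i ∂_i (∂_i u / W)(x)`. -/
noncomputable def graphMeanCurv (n : ℕ) (u : EuclideanSpace ℝ (Fin n) → ℝ)
    (x : EuclideanSpace ℝ (Fin n)) : ℝ :=
  ∑ i, fderiv ℝ (fun y => egrad n u y i / graphW n u y) x (EuclideanSpace.single i 1)

lemma exists_profile (a b c : ℝ) (hab : a < b) (hc : 1/(b-a) < c) :
    ∃ φ : ℝ → ℝ, ContDiff ℝ ∞ φ ∧ (∀ t, t ≤ a → φ t = 1) ∧ (∀ t, b ≤ t → φ t = 0) ∧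
      (∀ t, 0 ≤ φ t) ∧ (∀ t, |deriv φ t| ≤ c) := by
  have hba : 0 < b - a := by linarith
  have hc0 : 0 < c := lt_trans (by positivity) hc
  set δ : ℝ := (b - a - 1/c)/2 with hδdef
  have hic : 1/c < b - a := by
    have := one_div_lt_one_div_of_lt (by positivity) hc
    rwa [one_div_one_div] at this
  have hδ : 0 < δ := by rw [hδdef]; linarith
  have hIc : b - a - 2*δ = 1/c := by rw [hδdef]; ring
  set ψ : ℝ → ℝ := fun s => Real.smoothTransition ((s-a)/δ) * Real.smoothTransition ((b-s)/δ)
    with hψdef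
  have hψcd : ContDiff ℝ ∞ ψ :=
    (Real.smoothTransition.contDiff.comp ((contDiff_id.sub contDiff_const).div_const δ)).mul
      (Real.smoothTransition.contDiff.comp ((contDiff_const.sub contDiff_id).div_const δ))
  have hψ0 : ∀ s, 0 ≤ ψ s := fun s =>
    mul_nonneg (Real.smoothTransition.nonneg _) (Real.smoothTransition.nonneg _)
  have hψ1 : ∀ s, ψ s ≤ 1 :=
    fun s => mul_le_one₀ (Real.smoothTransition.le_one _) (Real.smoothTransition.nonneg _)
      (Real.smoothTransition.le_one _)
  have hψa : ∀ s, s ≤ a → ψ s = 0 := by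
    intro s hs
    have : (s - a)/δ ≤ 0 := div_nonpos_of_nonpos_of_nonneg (by linarith) hδ.le
    simp [hψdef, Real.smoothTransition.zero_of_nonpos this]
  have hψb : ∀ s, b ≤ s → ψ s = 0 := by
    intro s hs
    have : (b - s)/δ ≤ 0 := div_nonpos_of_nonpos_of_nonneg (by linarith) hδ.le
    simp [hψdef, Real.smoothTransition.zero_of_nonpos this]
  have hψmid : ∀ s, a + δ ≤ s → s ≤ b - δ → ψ s = 1 := by
    intro s h1 h2
    have e1 : (1:ℝ) ≤ (s - a)/δ := (le_div_iff₀ hδ).2 (by linarith)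
    have e2 : (1:ℝ) ≤ (b - s)/δ := (le_div_iff₀ hδ).2 (by linarith)
    simp [hψdef, Real.smoothTransition.one_of_one_le e1, Real.smoothTransition.one_of_one_le e2]
  set Φ : ℝ → ℝ := fun t => ∫ s in a..t, ψ s with hΦdef
  have hΦsplit : ∀ p q : ℝ, Φ q = Φ p + ∫ s in p..q, ψ s := by
    intro p q
    simp only [hΦdef]
    rw [intervalIntegral.integral_add_adjacent_intervals
      (hψcd.continuous.intervalIntegrable a p) (hψcd.continuous.intervalIntegrable p q)]
  have hzero : ∀ p q : ℝ, (∀ s ∈ Set.uIcc p q, ψ s = 0) → (∫ s in p..q, ψ s) = 0 := by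
    intro p q h
    rw [intervalIntegral.integral_congr h]
    simp
  have hΦd : ∀ t, HasDerivAt Φ (ψ t) t := by
    intro t
    exact intervalIntegral.integral_hasDerivAt_right
      (hψcd.continuous.intervalIntegrable _ _)
      (hψcd.continuous.aestronglyMeasurable.stronglyMeasurableAtFilter)
      hψcd.continuous.continuousAt
  have hΦdiff : Differentiable ℝ Φ := fun t => (hΦd t).differentiableAt
  have hΦderiv : deriv Φ = ψ := funext fun t => (hΦd t).deriv
  have hΦcd : ContDiff ℝ ∞ Φ := by
    rw [contDiff_infty_iff_deriv]
    exact ⟨hΦdiff, hΦderiv ▸ hψcd⟩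
  have hΦmono : Monotone Φ := by
    apply monotone_of_deriv_nonneg hΦdiff
    intro t; rw [hΦderiv]; exact hψ0 t
  have hΦa : ∀ t, t ≤ a → Φ t = 0 := by
    intro t ht
    have h0 : Φ a = 0 := by simp [hΦdef]
    have := hΦsplit a t
    rw [h0, hzero a t (fun s hs => hψa s (by rw [Set.uIcc_of_ge ht] at hs; exact hs.2))] at this
    simpa using this
  set I : ℝ := Φ b with hIdef
  have hΦb : ∀ t, b ≤ t → Φ t = I := by
    intro t ht
    have := hΦsplit b t
    rw [hzero b t (fun s hs => hψb s (by rw [Set.uIcc_of_le ht] at hs; exact hs.1))] at this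
    simpa [hIdef] using this
  have hIlb : 1/c ≤ I := by
    have hc1 : 0 < 1/c := by positivity
    have hadb : a + δ ≤ b - δ := by linarith [hIc]
    have key : (∫ s in (a+δ)..(b-δ), ψ s) = b - δ - (a + δ) := by
      have h1 : (∫ s in (a+δ)..(b-δ), ψ s) = ∫ s in (a+δ)..(b-δ), (1:ℝ) := by
        apply intervalIntegral.integral_congr
        intro s hs
        rw [Set.uIcc_of_le hadb] at hs
        exact hψmid s hs.1 hs.2
      rw [h1]; simp
    have e1 := hΦsplit (a+δ) (b-δ)
    have h1 : 0 ≤ Φ (a+δ) := by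
      rw [← hΦa a le_rfl]; exact hΦmono (by linarith)
    have h2 : Φ (b - δ) ≤ I := hΦmono (by linarith)
    rw [key] at e1
    have : b - a - 2*δ ≤ I := by linarith
    linarith [hIc ▸ this]
  have hI0 : 0 < I := lt_of_lt_of_le (by positivity) hIlb
  refine ⟨fun t => 1 - Φ t / I, ?_, ?_, ?_, ?_, ?_⟩
  · exact contDiff_const.sub (hΦcd.div_const I)
  · intro t ht; show 1 - Φ t / I = 1; rw [hΦa t ht]; simp
  · intro t ht; show 1 - Φ t / I = 0; rw [hΦb t ht]; field_simp; ring
  · intro t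
    have hub : Φ t ≤ I := by
      rcases le_total t b with h | h
      · exact hΦmono h
      · exact (hΦb t h).le
    have : Φ t / I ≤ 1 := (div_le_one hI0).2 hub
    linarith
  · intro t
    have hd : deriv (fun t => 1 - Φ t / I) t = -(ψ t / I) := by
      have : HasDerivAt (fun t => 1 - Φ t / I) (0 - ψ t / I) t :=
        (hasDerivAt_const t 1).sub ((hΦd t).div_const I)
      simpa using this.deriv
    rw [hd, abs_neg, abs_div, abs_of_nonneg (hψ0 t), abs_of_pos hI0]
    have h1 : ψ t / I ≤ 1 / I := by gcongr; exact hψ1 t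
    have h2 : 1 / I ≤ c := by
      rw [div_le_iff₀ hI0]
      calc (1:ℝ) = c * (1/c) := by field_simp
      _ ≤ c * I := mul_le_mul_of_nonneg_left hIlb hc0.le
    linarith

lemma exists_cutoff {E : Type*} [NormedAddCommGroup E] [InnerProductSpace ℝ E]
    (a b c : ℝ) (h0a : 0 < a) (hab : a < b) (hc : 1/(b-a) < c) :
    ∃ f : E → ℝ, ContDiff ℝ ∞ f ∧ (∀ x, ‖x‖ ≤ a → f x = 1) ∧ (∀ x, b ≤ ‖x‖ → f x = 0) ∧
      (∀ x, 0 ≤ f x) ∧ (∀ x, ‖fderiv ℝ f x‖ ≤ c) := by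
  have hba : 0 < b - a := by linarith
  have hc0 : 0 < c := lt_trans (by positivity) hc
  obtain ⟨φ, hφcd, hφ1, hφ0, hφpos, hφd⟩ := exists_profile a b c hab hc
  have hφdiff : Differentiable ℝ φ := hφcd.differentiable (by simp)
  have hφlip : LipschitzWith c.toNNReal φ := by
    apply lipschitzWith_of_nnnorm_deriv_le hφdiff
    intro t
    rw [← NNReal.coe_le_coe, coe_nnnorm, Real.coe_toNNReal _ hc0.le, Real.norm_eq_abs]
    exact hφd t
  refine ⟨fun x => φ ‖x‖, ?_, fun x hx => hφ1 _ hx, fun x hx => hφ0 _ hx,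
    fun x => hφpos _, ?_⟩
  · rw [contDiff_iff_contDiffAt]
    intro x
    rcases eq_or_ne x 0 with rfl | hx
    · apply ContDiffAt.congr_of_eventuallyEq (contDiffAt_const (c := (1:ℝ)))
      have ho : IsOpen {y : E | ‖y‖ < a} := isOpen_lt continuous_norm continuous_const
      filter_upwards [ho.mem_nhds (by simpa using h0a)] with y hy
      exact hφ1 _ hy.le
    · exact hφcd.contDiffAt.comp x (contDiffAt_norm ℝ hx)
  · intro x
    have hlip : LipschitzWith c.toNNReal (fun x : E => φ ‖x‖) := by
      have := hφlip.comp (lipschitzWith_one_norm (E := E))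
      rw [mul_one] at this; exact this
    calc ‖fderiv ℝ (fun x : E => φ ‖x‖) x‖ ≤ c.toNNReal := norm_fderiv_le_of_lipschitz ℝ hlip
      _ = c := Real.coe_toNNReal _ hc0.le

/-- Polynomial growth of the 1-volume of an entire graph: if `u : ℝⁿ → ℝ` is
smooth and the mean curvature `S₁ = div (∇u/W)` of its graph is nonnegative
everywhere, then for every `R > 0` and `0 < θ < 1`,
`∫_{B(0,θR)} div (∇u/W) dx ≤ vol (B(0,R)) / ((1−θ)·R)`. -/
theorem entire_graph_mean_curvature_integral_growth (n : ℕ) (hn : 1 ≤ n)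
    (u : EuclideanSpace ℝ (Fin n) → ℝ) (hu : ContDiff ℝ (⊤ : ℕ∞) u)
    (hS1 : ∀ x, 0 ≤ graphMeanCurv n u x) :
    ∀ R : ℝ, 0 < R → ∀ θ : ℝ, 0 < θ → θ < 1 →
      (∫ x in Metric.ball (0 : EuclideanSpace ℝ (Fin n)) (θ * R),
          graphMeanCurv n u x) ≤
        (volume (Metric.ball (0 : EuclideanSpace ℝ (Fin n)) R)).toReal /
          ((1 - θ) * R) := by
  intro R hR θ hθ0 hθ1
  set V : Fin n → EuclideanSpace ℝ (Fin n) → ℝ := fun i x => egrad n u x i / graphW n u x with hV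
  set S : EuclideanSpace ℝ (Fin n) → ℝ := graphMeanCurv n u with hS
  -- basic smoothness facts
  have hgcd : ∀ i, ContDiff ℝ ∞ (fun x : EuclideanSpace ℝ (Fin n) => egrad n u x i) := by
    intro i
    show ContDiff ℝ ∞ fun x : EuclideanSpace ℝ (Fin n) => fderiv ℝ u x (EuclideanSpace.single i 1)
    exact (hu.fderiv_right (by simp)).clm_apply contDiff_const
  have hsum_nonneg : ∀ x : EuclideanSpace ℝ (Fin n), 0 ≤ ∑ i, egrad n u x i ^ 2 :=
    fun x => Finset.sum_nonneg fun i _ => sq_nonneg _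
  have hWpos : ∀ x : EuclideanSpace ℝ (Fin n), 0 < graphW n u x := by
    intro x
    have : (0:ℝ) < 1 + ∑ i, egrad n u x i ^ 2 := by linarith [hsum_nonneg x]
    exact Real.sqrt_pos.2 this
  have hW1 : ∀ x : EuclideanSpace ℝ (Fin n), 1 ≤ graphW n u x := by
    intro x
    rw [show (1:ℝ) = Real.sqrt 1 by simp]
    exact Real.sqrt_le_sqrt (by linarith [hsum_nonneg x])
  have hWsq : ∀ x : EuclideanSpace ℝ (Fin n), (graphW n u x) ^ 2 = 1 + ∑ i, egrad n u x i ^ 2 := by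
    intro x
    exact Real.sq_sqrt (by linarith [hsum_nonneg x])
  have hWcd : ContDiff ℝ ∞ (graphW n u) := by
    rw [contDiff_iff_contDiffAt]
    intro x
    have hin : ContDiff ℝ ∞ (fun x : EuclideanSpace ℝ (Fin n) => 1 + ∑ i, egrad n u x i ^ 2) :=
      contDiff_const.add (ContDiff.sum fun i _ => (hgcd i).pow 2)
    have hne : (1 + ∑ i, egrad n u x i ^ 2) ≠ 0 := by nlinarith [hsum_nonneg x]
    exact (Real.contDiffAt_sqrt hne).comp x hin.contDiffAt
  have hVcd : ∀ i, ContDiff ℝ ∞ (V i) :=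
    fun i => (hgcd i).div hWcd fun x => (hWpos x).ne'
  have hVdiff : ∀ i, Differentiable ℝ (V i) :=
    fun i => (hVcd i).differentiable (by simp)
  have hVsum_le : ∀ x : EuclideanSpace ℝ (Fin n), ∑ i, (V i x) ^ 2 ≤ 1 := by
    intro x
    have : ∑ i, (V i x) ^ 2 = (∑ i, egrad n u x i ^ 2) / (graphW n u x) ^ 2 := by
      rw [Finset.sum_div]
      exact Finset.sum_congr rfl fun i _ => by rw [hV]; rw [div_pow]
    rw [this, div_le_one (pow_pos (hWpos x) 2)]
    rw [hWsq x]; linarith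
  have hSdef : ∀ x, S x = ∑ i, fderiv ℝ (V i) x (EuclideanSpace.single i 1) := fun x => rfl
  have hVdcont : ∀ i, Continuous (fun x : EuclideanSpace ℝ (Fin n) => fderiv ℝ (V i) x (EuclideanSpace.single i 1)) :=
    fun i => ((((hVcd i).fderiv_right (m := ∞) (by exact_mod_cast le_top)).clm_apply contDiff_const).continuous : Continuous _)
  have hScont : Continuous S := by
    rw [hS, show graphMeanCurv n u = fun x => ∑ i, fderiv ℝ (V i) x (EuclideanSpace.single i 1)
      from rfl]
    exact continuous_finset_sum _ fun i _ => hVdcont i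
  -- reduction to a strict constant
  set K : ℝ := (1 - θ) * R with hK
  have hK0 : 0 < K := by rw [hK]; nlinarith
  set A : ℝ := (volume (Metric.ball (0 : EuclideanSpace ℝ (Fin n)) R)).toReal with hA
  have hA0 : 0 < A := by
    rw [hA]
    apply ENNReal.toReal_pos
    · exact (Metric.measure_ball_pos volume 0 hR).ne'
    · exact (measure_ball_lt_top).ne
  suffices H : ∀ c : ℝ, 1/K < c → (∫ x in Metric.ball (0 : EuclideanSpace ℝ (Fin n)) (θ * R), S x) ≤ c * A by
    apply le_of_forall_pos_le_add
    intro ε hε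
    have h1 : 1/K < 1/K + ε/A := by
      have : 0 < ε / A := div_pos hε hA0
      linarith
    calc (∫ x in Metric.ball (0 : EuclideanSpace ℝ (Fin n)) (θ * R), S x) ≤ (1/K + ε/A) * A :=
          H _ h1
      _ = A / K + ε := by
          field_simp
  intro c hc
  have hab : θ * R < R := by nlinarith
  have hKba : R - θ * R = K := by rw [hK]; ring
  obtain ⟨f, hfcd, hf1, hf0, hfpos, hfd⟩ :=
    exists_cutoff (E := EuclideanSpace ℝ (Fin n)) (θ * R) R c (by positivity) hab (by rw [hKba]; exact hc)
  have hfc : Continuous f := hfcd.continuous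
  have hfsupp : HasCompactSupport f := by
    apply HasCompactSupport.intro (isCompact_closedBall (0 : EuclideanSpace ℝ (Fin n)) R)
    intro x hx
    rw [Metric.mem_closedBall, dist_zero_right, not_le] at hx
    exact hf0 x hx.le
  have hfderiv0 : ∀ x : EuclideanSpace ℝ (Fin n), R < ‖x‖ → fderiv ℝ f x = 0 := by
    intro x hx
    have ho : IsOpen {y : EuclideanSpace ℝ (Fin n) | R < ‖y‖} := isOpen_lt continuous_const continuous_norm
    have hev : f =ᶠ[nhds x] (fun _ => (0:ℝ)) := by
      filter_upwards [ho.mem_nhds hx] with y hy using hf0 y hy.le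
    rw [hev.fderiv_eq, fderiv_fun_const]
    rfl
  have hfdsupp : HasCompactSupport (fun x : EuclideanSpace ℝ (Fin n) => fderiv ℝ f x) := by
    apply HasCompactSupport.intro (isCompact_closedBall (0 : EuclideanSpace ℝ (Fin n)) R)
    intro x hx
    rw [Metric.mem_closedBall, dist_zero_right, not_le] at hx
    exact hfderiv0 x hx
  have hfdcont : Continuous (fun x : EuclideanSpace ℝ (Fin n) => fderiv ℝ f x) :=
    hfcd.continuous_fderiv (by simp)
  have hfdvcont : ∀ v : EuclideanSpace ℝ (Fin n), Continuous (fun x : EuclideanSpace ℝ (Fin n) => fderiv ℝ f x v) :=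
    fun v => (ContinuousLinearMap.apply ℝ ℝ v).continuous.comp hfdcont
  have hfdvsupp : ∀ v : EuclideanSpace ℝ (Fin n), HasCompactSupport (fun x : EuclideanSpace ℝ (Fin n) => fderiv ℝ f x v) := by
    intro v
    exact hfdsupp.comp_left (g := fun L : EuclideanSpace ℝ (Fin n) →L[ℝ] ℝ => L v) rfl
  -- integrability facts
  have hint1 : ∀ g : EuclideanSpace ℝ (Fin n) → ℝ, Continuous g → Integrable (fun x => f x * g x) :=
    fun g hg => (hfc.mul hg).integrable_of_hasCompactSupport (hfsupp.mul_right)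
  have hint2 : ∀ (v : EuclideanSpace ℝ (Fin n)) (g : EuclideanSpace ℝ (Fin n) → ℝ), Continuous g →
      Integrable (fun x => fderiv ℝ f x v * g x) :=
    fun v g hg => ((hfdvcont v).mul hg).integrable_of_hasCompactSupport
      ((hfdvsupp v).mul_right)
  -- integration by parts in each direction
  have hibp : ∀ i, (∫ x : EuclideanSpace ℝ (Fin n), f x * fderiv ℝ (V i) x (EuclideanSpace.single i 1)) =
      -∫ x : EuclideanSpace ℝ (Fin n), fderiv ℝ f x (EuclideanSpace.single i 1) * V i x := by
    intro i
    exact integral_mul_fderiv_eq_neg_fderiv_mul_of_integrable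
      (hint2 _ _ (hVcd i).continuous) (hint1 _ (hVdcont i)) (hint1 _ (hVcd i).continuous)
      (fun x _ => hfcd.differentiable (by simp) x) (fun x _ => hVdiff i x)
  -- step 1
  have step1 : (∫ x in Metric.ball (0 : EuclideanSpace ℝ (Fin n)) (θ * R), S x) ≤ ∫ x : EuclideanSpace ℝ (Fin n), f x * S x := by
    have hSint : IntegrableOn S (Metric.ball (0 : EuclideanSpace ℝ (Fin n)) (θ * R)) := by
      apply IntegrableOn.mono_set _ (Metric.ball_subset_closedBall)
      exact hScont.continuousOn.integrableOn_compact (isCompact_closedBall _ _)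
    rw [← integral_indicator measurableSet_ball]
    apply integral_mono (hSint.integrable_indicator measurableSet_ball)
      (hint1 S hScont)
    intro x
    show Set.indicator (Metric.ball (0 : EuclideanSpace ℝ (Fin n)) (θ * R)) S x ≤ f x * S x
    by_cases hx : x ∈ Metric.ball (0 : EuclideanSpace ℝ (Fin n)) (θ * R)
    · rw [Set.indicator_of_mem hx]
      rw [Metric.mem_ball, dist_zero_right] at hx
      rw [hf1 x hx.le, one_mul]
    · rw [Set.indicator_of_notMem hx]
      exact mul_nonneg (hfpos x) (hS1 x)
  -- step 2
  have step2 : (∫ x : EuclideanSpace ℝ (Fin n), f x * S x) =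
      ∑ i, ∫ x : EuclideanSpace ℝ (Fin n), f x * fderiv ℝ (V i) x (EuclideanSpace.single i 1) := by
    rw [← integral_finset_sum _ fun i _ => hint1 _ (hVdcont i)]
    congr 1
    funext x
    rw [hSdef x, Finset.mul_sum]
  -- step 3: rewrite via integration by parts
  have step3 : ∑ i, (∫ x : EuclideanSpace ℝ (Fin n), f x * fderiv ℝ (V i) x (EuclideanSpace.single i 1)) =
      ∫ x : EuclideanSpace ℝ (Fin n), -(∑ i, fderiv ℝ f x (EuclideanSpace.single i 1) * V i x) := by
    calc ∑ i, (∫ x : EuclideanSpace ℝ (Fin n), f x * fderiv ℝ (V i) x (EuclideanSpace.single i 1))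
        = ∑ i, -∫ x : EuclideanSpace ℝ (Fin n), fderiv ℝ f x (EuclideanSpace.single i 1) * V i x :=
          Finset.sum_congr rfl fun i _ => hibp i
      _ = -∑ i, ∫ x : EuclideanSpace ℝ (Fin n), fderiv ℝ f x (EuclideanSpace.single i 1) * V i x := by
          rw [Finset.sum_neg_distrib]
      _ = -∫ x : EuclideanSpace ℝ (Fin n), ∑ i, fderiv ℝ f x (EuclideanSpace.single i 1) * V i x := by
          rw [integral_finset_sum _ fun i _ => hint2 _ _ (hVcd i).continuous]
      _ = ∫ x : EuclideanSpace ℝ (Fin n), -(∑ i, fderiv ℝ f x (EuclideanSpace.single i 1) * V i x) :=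
          (integral_neg _).symm
  -- step 4: pointwise bound
  have step4 : (∫ x : EuclideanSpace ℝ (Fin n), -(∑ i, fderiv ℝ f x (EuclideanSpace.single i 1) * V i x)) ≤
      ∫ x : EuclideanSpace ℝ (Fin n), Set.indicator (Metric.closedBall (0 : EuclideanSpace ℝ (Fin n)) R) (fun _ => c) x := by
    apply integral_mono
    · exact ((integrable_finset_sum _ fun i _ => hint2 _ _ (hVcd i).continuous).neg)
    · apply IntegrableOn.integrable_indicator _ measurableSet_closedBall
      exact integrableOn_const measure_closedBall_lt_top.ne
    intro x
    show -(∑ i, fderiv ℝ f x (EuclideanSpace.single i 1) * V i x) ≤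
      Set.indicator (Metric.closedBall (0 : EuclideanSpace ℝ (Fin n)) R) (fun _ => c) x
    set w : EuclideanSpace ℝ (Fin n) := ∑ i, V i x • EuclideanSpace.single i 1 with hw
    have hkey : ∑ i, fderiv ℝ f x (EuclideanSpace.single i 1) * V i x = fderiv ℝ f x w := by
      rw [hw, map_sum]
      refine Finset.sum_congr rfl fun i _ => ?_
      rw [(fderiv ℝ f x).map_smul, smul_eq_mul, mul_comm]
    have hwcomp : ∀ j, w j = V j x := by
      intro j
      rw [hw]
      rw [WithLp.ofLp_sum, Finset.sum_apply]
      rw [Finset.sum_eq_single j]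
      · simp [EuclideanSpace.single_apply]
      · intro i _ hij
        simp [PiLp.smul_apply, EuclideanSpace.single_apply, if_neg (Ne.symm hij)]
      · intro h
        simp at h
    have hwnorm : ‖w‖ ≤ 1 := by
      rw [EuclideanSpace.norm_eq]
      rw [show (1:ℝ) = Real.sqrt 1 by simp]
      apply Real.sqrt_le_sqrt
      calc ∑ j, ‖w j‖ ^ 2 = ∑ j, (V j x) ^ 2 := by
            refine Finset.sum_congr rfl fun j _ => ?_
            rw [hwcomp j, Real.norm_eq_abs, sq_abs]
        _ ≤ 1 := hVsum_le x
    rw [hkey]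
    by_cases hx : x ∈ Metric.closedBall (0 : EuclideanSpace ℝ (Fin n)) R
    · rw [Set.indicator_of_mem hx]
      calc -(fderiv ℝ f x w) ≤ ‖fderiv ℝ f x w‖ := (neg_le_abs _).trans_eq (Real.norm_eq_abs _).symm
        _ ≤ ‖fderiv ℝ f x‖ * ‖w‖ := (fderiv ℝ f x).le_opNorm w
        _ ≤ c * 1 := mul_le_mul (hfd x) hwnorm (norm_nonneg _) (le_trans (norm_nonneg _) (hfd x))
        _ = c := mul_one c
    · rw [Set.indicator_of_notMem hx]
      rw [Metric.mem_closedBall, dist_zero_right, not_le] at hx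
      rw [hfderiv0 x hx]
      simp
  -- step 5: compute the indicator integral
  have step5 : (∫ x : EuclideanSpace ℝ (Fin n), Set.indicator (Metric.closedBall (0 : EuclideanSpace ℝ (Fin n)) R) (fun _ => c) x) = c * A := by
    rw [integral_indicator_const _ measurableSet_closedBall]
    have hmeq : volume (Metric.closedBall (0 : EuclideanSpace ℝ (Fin n)) R) = volume (Metric.ball (0 : EuclideanSpace ℝ (Fin n)) R) := by
      haveI : Nonempty (Fin n) := Fin.pos_iff_nonempty.1 hn
      exact Measure.addHaar_closedBall_eq_addHaar_ball (μ := volume) 0 R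
    rw [measureReal_def, hmeq, hA, smul_eq_mul, mul_comm]
  calc (∫ x in Metric.ball (0 : EuclideanSpace ℝ (Fin n)) (θ * R), S x) ≤ ∫ x : EuclideanSpace ℝ (Fin n), f x * S x := step1
    _ = ∑ i, ∫ x : EuclideanSpace ℝ (Fin n), f x * fderiv ℝ (V i) x (EuclideanSpace.single i 1) := step2
    _ = ∫ x : EuclideanSpace ℝ (Fin n), -(∑ i, fderiv ℝ f x (EuclideanSpace.single i 1) * V i x) := step3
    _ ≤ ∫ x : EuclideanSpace ℝ (Fin n), Set.indicator (Metric.closedBall (0 : EuclideanSpace ℝ (Fin n)) R) (fun _ => c) x := step4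
    _ = c * A := step5
end
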